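/- arXiv:2305.03801 — 8 statements merged into one kernel-verified Lean document; each statement's English description precedes it below -/
import Mathlib

section
/- Let w, u' ∈ {±1}^n, let v_i' = u' ⊕ c_i for i ∈ [t], and define w' = (t/n)·w·diag(u')·diag(J_{n/t},…,J_{n/t})·diag(u'). Then w' lies in the real span of {v_1',…,v_t'}, and w' is the closest vector to w in that span: ‖w − w'‖₂ ≤ ‖w − z‖₂ for every z in Span_ℝ{v_1',…,v_t'}. -/
open Finset Matrix

/-- Let w, u' ∈ {±1}^n, let v_i' = u' ⊕ c_i (componentwise real product),
where c_i is the i-th row of C = L ⊗ 𝟙_{n/t} for a Hadamard matrix L of order t, and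
define w' = (t/n)·w·diag(u')·diag(J_{n/t},…,J_{n/t})·diag(u'). Then w' lies in the real
span of {v_1',…,v_t'} and is the closest vector to w in that span. -/
theorem stmt3 (t m : ℕ) (ht : 0 < t) (hm : 0 < m)
    (L : Matrix (Fin t) (Fin t) ℝ) (hL : ∀ i r, L i r = 1 ∨ L i r = -1)
    (hHad : L * Lᵀ = (t : ℝ) • (1 : Matrix (Fin t) (Fin t) ℝ))
    (C : Matrix (Fin t) (Fin (t * m)) ℝ)
    (hC : ∀ i (j : Fin (t * m)) (r : Fin t), (j : ℕ) / m = (r : ℕ) → C i j = L i r)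
    (w u' : Fin (t * m) → ℝ)
    (hw : ∀ j, w j = 1 ∨ w j = -1) (hu' : ∀ j, u' j = 1 ∨ u' j = -1)
    (v : Fin t → Fin (t * m) → ℝ)
    (hv : ∀ i j, v i j = u' j * C i j)
    (B : Matrix (Fin (t * m)) (Fin (t * m)) ℝ)
    (hB : ∀ j k, B j k = if (j : ℕ) / m = (k : ℕ) / m then 1 else 0)
    (w' : Fin (t * m) → ℝ)
    (hw' : w' = ((t : ℝ) / ((t * m : ℕ) : ℝ)) •
      Matrix.vecMul (Matrix.vecMul (Matrix.vecMul w (Matrix.diagonal u')) B)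
        (Matrix.diagonal u')) :
    w' ∈ Submodule.span ℝ (Set.range v) ∧
    ∀ z ∈ Submodule.span ℝ (Set.range v),
      Real.sqrt (∑ j, (w j - w' j) ^ 2) ≤ Real.sqrt (∑ j, (w j - z j) ^ 2) := by
  have hm' : (m : ℝ) ≠ 0 := Nat.cast_ne_zero.mpr hm.ne'
  have ht' : (t : ℝ) ≠ 0 := Nat.cast_ne_zero.mpr ht.ne'
  set q : Fin (t * m) → Fin t :=
    fun j => ⟨(j : ℕ) / m, (Nat.div_lt_iff_lt_mul hm).mpr j.isLt⟩ with hqdef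
  have hCq : ∀ i j, C i j = L i (q j) := fun i j => hC i j (q j) rfl
  have hqeq : ∀ j k : Fin (t * m), ((j : ℕ) / m = (k : ℕ) / m) ↔ q j = q k := by
    intro j k
    simp [hqdef, Fin.ext_iff]
  have hBq : ∀ k j, B k j = if q k = q j then 1 else 0 := by
    intro k j
    rw [hB]
    exact if_congr (hqeq k j) rfl rfl
  set g : Fin t → ℝ :=
    fun r => (1 / (m : ℝ)) * ∑ j, if q j = r then w j * u' j else 0 with hgdef
  have hu2 : ∀ j, u' j * u' j = 1 := by
    intro j; rcases hu' j with h | h <;> rw [h] <;> ring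
  -- pointwise formula for w'
  have hw'j : ∀ j, w' j = u' j * g (q j) := by
    intro j
    have hcast : ((t * m : ℕ) : ℝ) = (t : ℝ) * (m : ℝ) := by push_cast; ring
    have h1 : ∀ y : Fin (t * m) → ℝ, Matrix.vecMul y B j = ∑ k, y k * B k j := by
      intro y; simp [Matrix.vecMul, dotProduct]
    rw [hw']
    simp only [Pi.smul_apply, smul_eq_mul, Matrix.vecMul_diagonal]
    rw [h1]
    have h2 : ∑ k, Matrix.vecMul w (Matrix.diagonal u') k * B k j
        = ∑ k, if q k = q j then w k * u' k else 0 := by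
      refine Finset.sum_congr rfl fun k _ => ?_
      rw [Matrix.vecMul_diagonal, hBq, mul_ite, mul_one, mul_zero]
    rw [h2, hgdef]
    rw [hcast]
    field_simp
  have hcount : ∀ r : Fin t, ∑ j, (if q j = r then (1 : ℝ) else 0) = m := by
    intro r
    rw [← Equiv.sum_comp (finProdFinEquiv : Fin t × Fin m ≃ Fin (t * m))
      (fun j => if q j = r then (1 : ℝ) else 0)]
    have hq' : ∀ p : Fin t × Fin m, q (finProdFinEquiv p) = p.1 := by
      intro p
      apply Fin.ext
      show ((p.2 : ℕ) + m * (p.1 : ℕ)) / m = (p.1 : ℕ)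
      rw [Nat.add_mul_div_left _ _ hm, Nat.div_eq_of_lt p.2.isLt, Nat.zero_add]
    simp only [hq']
    rw [Fintype.sum_prod_type]
    have hx : ∀ x : Fin t, ∑ _b : Fin m, (if x = r then (1 : ℝ) else 0)
        = if x = r then (m : ℝ) else 0 := by
      intro x; by_cases h : x = r <;> simp [h]
    rw [Finset.sum_congr rfl fun x _ => hx x]
    simp
  -- column orthogonality of L
  have hL2 : ∀ r s : Fin t, ∑ i, L i r * L i s = if r = s then (t : ℝ) else 0 := by
    have h2 : L * ((t : ℝ)⁻¹ • Lᵀ) = 1 := by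
      rw [Matrix.mul_smul, hHad, smul_smul, inv_mul_cancel₀ ht', one_smul]
    have h3 := mul_eq_one_comm.mp h2
    have h1 : Lᵀ * L = (t : ℝ) • (1 : Matrix (Fin t) (Fin t) ℝ) := by
      calc Lᵀ * L = (t : ℝ) • (((t : ℝ)⁻¹ • Lᵀ) * L) := by
            rw [Matrix.smul_mul, smul_smul, mul_inv_cancel₀ ht', one_smul]
        _ = (t : ℝ) • 1 := by rw [h3]
    intro r s
    have := congrFun (congrFun h1 r) s
    simpa [Matrix.mul_apply, Matrix.transpose_apply, Matrix.one_apply,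
      Matrix.smul_apply, mul_ite] using this
  -- w' as an explicit combination of the v i
  set a : Fin t → ℝ := fun i => (1 / (t : ℝ)) * ∑ r, g r * L i r with hadef
  have key : w' = ∑ i, a i • v i := by
    funext j
    rw [Finset.sum_apply]
    simp only [Pi.smul_apply, smul_eq_mul, hv, hCq]
    rw [hw'j j]
    have hsum : ∑ i, a i * L i (q j) = g (q j) := by
      calc ∑ i, a i * L i (q j)
          = (1 / (t : ℝ)) * ∑ i, ∑ r, g r * (L i r * L i (q j)) := by
            rw [Finset.mul_sum]
            refine Finset.sum_congr rfl fun i _ => ?_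
            rw [hadef]
            rw [mul_assoc, Finset.sum_mul]
            congr 1
            exact Finset.sum_congr rfl fun r _ => by ring
        _ = (1 / (t : ℝ)) * ∑ r, g r * ∑ i, L i r * L i (q j) := by
            rw [Finset.sum_comm]
            congr 1
            exact Finset.sum_congr rfl fun r _ => by rw [Finset.mul_sum]
        _ = (1 / (t : ℝ)) * ∑ r, g r * (if r = q j then (t : ℝ) else 0) := by
            congr 1
            exact Finset.sum_congr rfl fun r _ => by rw [hL2]
        _ = g (q j) := by
            simp only [mul_ite, mul_zero]
            rw [Finset.sum_ite_eq' Finset.univ (q j)]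
            simp [ht']
            field_simp
    have h4 : ∑ i, a i * (u' j * L i (q j)) = u' j * ∑ i, a i * L i (q j) := by
      rw [Finset.mul_sum]
      exact Finset.sum_congr rfl fun i _ => by ring
    rw [h4, hsum]
  have hmem : w' ∈ Submodule.span ℝ (Set.range v) := by
    rw [key]
    exact Submodule.sum_mem _ fun i _ =>
      Submodule.smul_mem _ _ (Submodule.subset_span ⟨i, rfl⟩)
  -- orthogonality of w - w' to each v i
  have hbase : ∀ i, ∑ j, (w j - w' j) * v i j = 0 := by
    intro i
    have hA : ∑ j, w' j * v i j = ∑ j, g (q j) * L i (q j) := by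
      refine Finset.sum_congr rfl fun j _ => ?_
      rw [hw'j j, hv, hCq]
      calc u' j * g (q j) * (u' j * L i (q j))
          = u' j * u' j * (g (q j) * L i (q j)) := by ring
        _ = g (q j) * L i (q j) := by rw [hu2 j, one_mul]
    have hA2 : ∑ j, g (q j) * L i (q j) = ∑ j, w j * u' j * L i (q j) := by
      calc ∑ j, g (q j) * L i (q j)
          = (1 / (m : ℝ)) * ∑ j, ∑ k, (if q k = q j then w k * u' k * L i (q j) else 0) := by
            rw [Finset.mul_sum]
            refine Finset.sum_congr rfl fun j _ => ?_
            rw [hgdef]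
            rw [mul_assoc, Finset.sum_mul]
            congr 1
            exact Finset.sum_congr rfl fun k _ => by rw [ite_mul, zero_mul]
        _ = (1 / (m : ℝ)) * ∑ k, ∑ j, (if q j = q k then w k * u' k * L i (q k) else 0) := by
            rw [Finset.sum_comm]
            congr 1
            refine Finset.sum_congr rfl fun k _ => Finset.sum_congr rfl fun j _ => ?_
            by_cases h : q k = q j
            · simp [h]
            · simp [h, Ne.symm h]
        _ = (1 / (m : ℝ)) * ∑ k, w k * u' k * L i (q k) * (m : ℝ) := by
            congr 1
            refine Finset.sum_congr rfl fun k _ => ?_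
            rw [← hcount (q k), Finset.mul_sum]
            exact Finset.sum_congr rfl fun j _ => by rw [mul_ite, mul_one, mul_zero]
        _ = ∑ j, w j * u' j * L i (q j) := by
            rw [Finset.mul_sum]
            refine Finset.sum_congr rfl fun k _ => ?_
            field_simp
    have hB' : ∑ j, w j * v i j = ∑ j, w j * u' j * L i (q j) := by
      refine Finset.sum_congr rfl fun j _ => ?_
      rw [hv, hCq]; ring
    have hsplit : ∑ j, (w j - w' j) * v i j = ∑ j, w j * v i j - ∑ j, w' j * v i j := by
      rw [← Finset.sum_sub_distrib]
      exact Finset.sum_congr rfl fun j _ => by ring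
    rw [hsplit, hA, hA2, hB', sub_self]
  have horth : ∀ y ∈ Submodule.span ℝ (Set.range v), ∑ j, (w j - w' j) * y j = 0 := by
    intro y hy
    induction hy using Submodule.span_induction with
    | mem x hx => obtain ⟨i, rfl⟩ := hx; exact hbase i
    | zero => simp
    | add x y hx hy ihx ihy =>
        have : ∑ j, (w j - w' j) * (x + y) j
            = (∑ j, (w j - w' j) * x j) + ∑ j, (w j - w' j) * y j := by
          rw [← Finset.sum_add_distrib]
          exact Finset.sum_congr rfl fun j _ => by simp [Pi.add_apply]; ring
        rw [this, ihx, ihy, add_zero]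
    | smul c x hx ih =>
        have : ∑ j, (w j - w' j) * (c • x) j = c * ∑ j, (w j - w' j) * x j := by
          rw [Finset.mul_sum]
          exact Finset.sum_congr rfl fun j _ => by simp [Pi.smul_apply]; ring
        rw [this, ih, mul_zero]
  refine ⟨hmem, fun z hz => ?_⟩
  apply Real.sqrt_le_sqrt
  have hcross := horth (w' - z) (Submodule.sub_mem _ hmem hz)
  have hexp : ∑ j, (w j - z j) ^ 2
      = ∑ j, (w j - w' j) ^ 2 + 2 * (∑ j, (w j - w' j) * (w' - z) j)
        + ∑ j, (w' j - z j) ^ 2 := by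
    rw [Finset.mul_sum, ← Finset.sum_add_distrib, ← Finset.sum_add_distrib]
    refine Finset.sum_congr rfl fun j _ => ?_
    simp only [Pi.sub_apply]
    ring
  rw [hexp, hcross, mul_zero, add_zero]
  exact le_add_of_nonneg_right (Finset.sum_nonneg fun j _ => sq_nonneg _)
end

section
/- Let w, u' ∈ {±1}^n and define w' = (t/n)·w·diag(u')·diag(J_{n/t},…,J_{n/t})·diag(u'). Then ‖w − w'‖₂² = n − (t/n)·(w ⊕ u')·diag(J_{n/t},…,J_{n/t})·(w ⊕ u')ᵀ. -/
/-!
Put `v = w ⊙ u'` and `x = v B`. Since `u'` is a `±1` vector, `‖w - w'‖² = ‖v - (t/n) x‖²`.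
The block matrix `B` is symmetric with `B² = (n/t) B`, so `‖x‖² = (n/t) ⟨x, v⟩`; expanding the
square and using `‖v‖² = n` gives `n - 2 (t/n) ⟨x, v⟩ + (t/n) ⟨x, v⟩`.
-/

open Finset Matrix

section FiberOnes

variable {ι R : Type*} [Fintype ι] [CommSemiring R]

/-- For `f = Fin.divNat` on `Fin (t * m)` this is `diag(J_m, …, J_m)`. -/
def fiberOnes {κ : Type*} [DecidableEq κ] (f : ι → κ) : Matrix ι ι R :=
  of fun j k => if f j = f k then 1 else 0

omit [Fintype ι] in
theorem fiberOnes_isSymm {κ : Type*} [DecidableEq κ] (f : ι → κ) :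
    (fiberOnes f : Matrix ι ι R).IsSymm := by
  ext j k
  simp only [fiberOnes, transpose_apply, of_apply, eq_comm]

theorem fiberOnes_mul_self {κ : Type*} [DecidableEq κ] (f : ι → κ) {m : ℕ}
    (hf : ∀ j, #{l | f l = f j} = m) :
    (fiberOnes f : Matrix ι ι R) * fiberOnes f = m • fiberOnes f := by
  ext j k
  simp only [fiberOnes, mul_apply, of_apply, Matrix.smul_apply, ← ite_and, nsmul_eq_mul, mul_ite,
    mul_one, mul_zero]
  split_ifs with h
  · rw [sum_boole, ← hf k, h]
    simp_rw [and_iff_left_of_imp (Eq.symm : f _ = f k → _)]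
  · exact sum_eq_zero fun l _ => if_neg fun h' => h (h'.2.trans h'.1)

theorem vecMul_dotProduct_vecMul_self_of_mul_self {B : Matrix ι ι R} (hB : B.IsSymm)
    {r : R} (hBB : B * B = r • B) (v : ι → R) :
    (v ᵥ* B) ⬝ᵥ (v ᵥ* B) = r * ((v ᵥ* B) ⬝ᵥ v) := by
  rw [← dotProduct_mulVec, ← vecMul_transpose, hB.eq, vecMul_vecMul, hBB, vecMul_smul,
    dotProduct_smul, smul_eq_mul, dotProduct_comm]

end FiberOnes

theorem card_divNat_eq (t m : ℕ) (a : Fin t) : #{l : Fin (t * m) | l.divNat = a} = m := by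
  rw [card_equiv finProdFinEquiv.symm (t := {a} ×ˢ univ) (by simp [eq_comm])]
  simp

theorem sum_sub_mul_sq_of_sq_eq_one {ι : Type*} [Fintype ι] {u : ι → ℝ} (hu : ∀ j, u j ^ 2 = 1)
    (w y : ι → ℝ) : ∑ j, (w j - y j * u j) ^ 2 = ∑ j, (w j * u j - y j) ^ 2 :=
  sum_congr rfl fun j _ => by linear_combination (y j ^ 2 - w j ^ 2) * hu j

theorem sum_sub_const_mul_sq {ι : Type*} [Fintype ι] (v x : ι → ℝ) (c : ℝ) :
    ∑ j, (v j - c * x j) ^ 2 = v ⬝ᵥ v - 2 * c * (x ⬝ᵥ v) + c ^ 2 * (x ⬝ᵥ x) := by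
  simp only [dotProduct, mul_sum, ← sum_sub_distrib, ← sum_add_distrib]
  exact sum_congr rfl fun j _ => by ring

/-- Let w, u' ∈ {±1}^n and define
w' = (t/n)·w·diag(u')·diag(J_{n/t},…,J_{n/t})·diag(u'). Then
‖w − w'‖₂² = n − (t/n)·(w ⊕ u')·diag(J_{n/t},…,J_{n/t})·(w ⊕ u')ᵀ,
where w ⊕ u' is the componentwise real product of w and u'. -/
theorem stmt4 (t m : ℕ) (ht : 0 < t) (hm : 0 < m)
    (w u' : Fin (t * m) → ℝ)
    (hw : ∀ j, w j = 1 ∨ w j = -1) (hu' : ∀ j, u' j = 1 ∨ u' j = -1)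
    (B : Matrix (Fin (t * m)) (Fin (t * m)) ℝ)
    (hB : ∀ j k, B j k = if (j : ℕ) / m = (k : ℕ) / m then 1 else 0)
    (w' : Fin (t * m) → ℝ)
    (hw' : w' = ((t : ℝ) / ((t * m : ℕ) : ℝ)) •
      Matrix.vecMul (Matrix.vecMul (Matrix.vecMul w (Matrix.diagonal u')) B)
        (Matrix.diagonal u')) :
    ∑ j, (w j - w' j) ^ 2 =
      ((t * m : ℕ) : ℝ) - ((t : ℝ) / ((t * m : ℕ) : ℝ)) *
        dotProduct (Matrix.vecMul (fun j => w j * u' j) B)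
          (fun j => w j * u' j) := by
  set c : ℝ := (t : ℝ) / ((t * m : ℕ) : ℝ)
  set v : Fin (t * m) → ℝ := fun j => w j * u' j
  have hcm : c * m = 1 := by
    simp only [c, Nat.cast_mul]
    field_simp
  have hB_eq : B = fiberOnes Fin.divNat := by
    ext j k
    simp only [hB, fiberOnes, of_apply, ← Fin.val_inj, Fin.coe_divNat]
  have hBB : B * B = (m : ℝ) • B := by
    rw [hB_eq, fiberOnes_mul_self _ fun j => card_divNat_eq t m j.divNat, Nat.cast_smul_eq_nsmul]
  have hvv : v ⬝ᵥ v = ((t * m : ℕ) : ℝ) := by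
    have hv_sq : ∀ j, v j * v j = 1 := fun j => by
      simp only [v, ← sq, mul_pow, sq_eq_one_iff.mpr (hw j), sq_eq_one_iff.mpr (hu' j), one_pow]
    simp [dotProduct, hv_sq]
  have hw'_apply : ∀ j, w' j = c * (v ᵥ* B) j * u' j := by
    have hwu : w ᵥ* diagonal u' = v := funext fun j => vecMul_diagonal w u' j
    intro j
    rw [hw', hwu, Pi.smul_apply, vecMul_diagonal, smul_eq_mul, mul_assoc]
  calc ∑ j, (w j - w' j) ^ 2 = ∑ j, (v j - c * (v ᵥ* B) j) ^ 2 := by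
        simp only [hw'_apply, sum_sub_mul_sq_of_sq_eq_one (fun j => sq_eq_one_iff.mpr (hu' j))]
        rfl
    _ = v ⬝ᵥ v - 2 * c * ((v ᵥ* B) ⬝ᵥ v) + c ^ 2 * ((v ᵥ* B) ⬝ᵥ (v ᵥ* B)) :=
        sum_sub_const_mul_sq _ _ _
    _ = _ := by
        rw [hvv, vecMul_dotProduct_vecMul_self_of_mul_self (hB_eq ▸ fiberOnes_isSymm _) hBB]
        linear_combination c * ((v ᵥ* B) ⬝ᵥ v) * hcm
end

section
/- Let w, u' ∈ {±1}^n and define w' = (t/n)·w·diag(u')·diag(J_{n/t},…,J_{n/t})·diag(u'). Then ‖w − w'‖₂ = 2·√( d_H(w,u') − (t/n)·∑_{p=1}^t w_H((w ⊕ u')|_{S_p})² ). -/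
open Finset Matrix

lemma div_eq_iff' (m p j : ℕ) (hm : 0 < m) : j / m = p ↔ p * m ≤ j ∧ j < p * m + m := by
  have h1 := Nat.div_add_mod j m
  have h2 := Nat.mod_lt j hm
  have h3 : (j/m)*m = m*(j/m) := Nat.mul_comm _ _
  constructor
  · rintro rfl; omega
  · rintro ⟨ha, hb⟩
    exact Nat.div_eq_of_lt_le (by omega) (by rw [add_mul]; omega)

lemma block_card (t m : ℕ) (hm : 0 < m) (p : Fin t) :
    (Finset.univ.filter (fun j : Fin (t*m) => (j:ℕ)/m = (p:ℕ))).card = m := by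
  classical
  rw [Finset.card_filter]
  rw [Fin.sum_univ_eq_sum_range (fun j => if j / m = (p:ℕ) then 1 else 0) (t*m)]
  rw [← Finset.card_filter]
  have : (Finset.range (t*m)).filter (fun j => j / m = (p:ℕ))
      = Finset.Ico ((p:ℕ)*m) ((p:ℕ)*m + m) := by
    ext j
    simp only [Finset.mem_filter, Finset.mem_range, Finset.mem_Ico, div_eq_iff' m (p:ℕ) j hm]
    have hp : (p:ℕ) + 1 ≤ t := p.isLt
    have h4 : ((p:ℕ)+1) * m ≤ t * m := Nat.mul_le_mul_right m hp
    rw [add_mul] at h4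
    omega
  rw [this, Nat.card_Ico]
  omega

lemma fiber_sum {M : Type*} [AddCommMonoid M] (t m : ℕ) (F : Fin (t*m) → M) :
    ∑ p : Fin t, ∑ j ∈ Finset.univ.filter (fun j : Fin (t*m) => (j:ℕ)/m = (p:ℕ)), F j
      = ∑ j, F j := by
  classical
  rcases Nat.eq_zero_or_pos m with hm | hm
  · subst hm
    simp [Finset.sum_of_isEmpty]
  have hdiv : ∀ j : Fin (t*m), (j:ℕ)/m < t := fun j =>
    Nat.div_lt_of_lt_mul (lt_of_lt_of_le j.isLt (le_of_eq (Nat.mul_comm t m)))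
  simp only [Finset.sum_filter]
  rw [Finset.sum_comm]
  refine Finset.sum_congr rfl fun j _ => ?_
  rw [Finset.sum_eq_single (⟨(j:ℕ)/m, hdiv j⟩ : Fin t)]
  · simp
  · intro p _ hp
    rw [if_neg]
    intro h
    exact hp (by exact Fin.ext h.symm)
  · intro h; exact absurd (Finset.mem_univ _) h

lemma blocksum {ι : Type*} (m : ℕ) (hm : 0 < m) (S : Finset ι) (v : ι → ℝ)
    [DecidablePred fun j => v j = -1]
    (hv : ∀ j ∈ S, v j = 1 ∨ v j = -1) (hcard : S.card = m) :
    ∑ j ∈ S, (v j - (1/(m:ℝ)) * ∑ k ∈ S, v k)^2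
      = 4 * ((S.filter (fun j => v j = -1)).card : ℝ)
        - (4/(m:ℝ)) * ((S.filter (fun j => v j = -1)).card : ℝ)^2 := by
  classical
  have hmR : (m:ℝ) ≠ 0 := Nat.cast_ne_zero.mpr hm.ne'
  set a : ℝ := ((S.filter (fun j => v j = -1)).card : ℝ) with ha
  have hT : ∑ k ∈ S, v k = (m:ℝ) - 2 * a := by
    have : ∑ k ∈ S, v k = ∑ k ∈ S, (1 - 2 * (if v k = -1 then (1:ℝ) else 0)) := by
      refine Finset.sum_congr rfl fun k hk => ?_
      rcases hv k hk with h | h <;> norm_num [h]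
    rw [this, Finset.sum_sub_distrib, ← Finset.mul_sum, Finset.sum_boole, Finset.sum_const,
      nsmul_eq_mul, mul_one, hcard]
  have hsq : ∑ k ∈ S, (v k)^2 = (m:ℝ) := by
    have : ∑ k ∈ S, (v k)^2 = ∑ k ∈ S, (1:ℝ) := by
      refine Finset.sum_congr rfl fun k hk => ?_
      rcases hv k hk with h | h <;> rw [h] <;> norm_num
    rw [this, Finset.sum_const, nsmul_eq_mul, mul_one, hcard]
  have expand : ∀ j ∈ S, (v j - (1/(m:ℝ)) * ∑ k ∈ S, v k)^2
      = (v j)^2 - (2/(m:ℝ)) * ((m:ℝ) - 2*a) * v j + (1/(m:ℝ))^2 * ((m:ℝ) - 2*a)^2 := by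
    intro j _
    rw [hT]; ring
  rw [Finset.sum_congr rfl expand]
  rw [Finset.sum_add_distrib, Finset.sum_sub_distrib, hsq, ← Finset.mul_sum, hT,
    Finset.sum_const, nsmul_eq_mul, hcard]
  field_simp
  ring

theorem neq_iff_mul_neg_one (x y : ℝ) (hx : x = 1 ∨ x = -1) (hy : y = 1 ∨ y = -1) :
    x ≠ y ↔ x * y = -1 := by
  rcases hx with h | h <;> rcases hy with h' | h' <;> rw [h, h'] <;> norm_num

/-- Let w, u' ∈ {±1}^n and define
w' = (t/n)·w·diag(u')·diag(J_{n/t},…,J_{n/t})·diag(u'). Then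
‖w − w'‖₂ = 2·√( d_H(w,u') − (t/n)·∑_{p=1}^t w_H((w ⊕ u')|_{S_p})² ), where d_H is
Hamming distance, w ⊕ u' is the componentwise real product, and w_H(·|_{S_p}) counts
the −1 entries within the p-th consecutive block S_p = {j : j / m = p} of size m = n/t. -/
theorem stmt5 (t m : ℕ) (ht : 0 < t) (hm : 0 < m)
    (w u' : Fin (t * m) → ℝ)
    (hw : ∀ j, w j = 1 ∨ w j = -1) (hu' : ∀ j, u' j = 1 ∨ u' j = -1)
    (B : Matrix (Fin (t * m)) (Fin (t * m)) ℝ)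
    (hB : ∀ j k, B j k = if (j : ℕ) / m = (k : ℕ) / m then 1 else 0)
    (w' : Fin (t * m) → ℝ)
    (hw' : w' = ((t : ℝ) / ((t * m : ℕ) : ℝ)) •
      Matrix.vecMul (Matrix.vecMul (Matrix.vecMul w (Matrix.diagonal u')) B)
        (Matrix.diagonal u')) :
    Real.sqrt (∑ j, (w j - w' j) ^ 2) =
      2 * Real.sqrt (
        ((Finset.univ.filter (fun j : Fin (t * m) => w j ≠ u' j)).card : ℝ) -
        ((t : ℝ) / ((t * m : ℕ) : ℝ)) *
          ∑ p : Fin t,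
            (((Finset.univ.filter (fun j : Fin (t * m) =>
              (j : ℕ) / m = (p : ℕ) ∧ w j * u' j = -1)).card : ℝ)) ^ 2) := by
  classical
  have hmR : (m:ℝ) ≠ 0 := Nat.cast_ne_zero.mpr hm.ne'
  have htR : (t:ℝ) ≠ 0 := Nat.cast_ne_zero.mpr ht.ne'
  have hc : ((t : ℝ) / ((t * m : ℕ) : ℝ)) = 1 / (m:ℝ) := by
    rw [Nat.cast_mul]; field_simp
  set v : Fin (t*m) → ℝ := fun j => w j * u' j with hv
  have hvpm : ∀ j, v j = 1 ∨ v j = -1 := by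
    intro j
    rcases hw j with h | h <;> rcases hu' j with h' | h' <;>
      simp [hv, h, h']
  -- explicit formula for w'
  have hw'j : ∀ j, w' j = (1/(m:ℝ)) *
      ((∑ k ∈ Finset.univ.filter (fun k : Fin (t*m) => (k:ℕ)/m = (j:ℕ)/m), v k) * u' j) := by
    intro j
    rw [hw', hc]
    simp only [Pi.smul_apply, smul_eq_mul, Matrix.vecMul_diagonal]
    congr 2
    rw [Matrix.vecMul, dotProduct]
    rw [Finset.sum_filter]
    refine Finset.sum_congr rfl fun k _ => ?_
    rw [Matrix.vecMul_diagonal, hB]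
    by_cases h : (k:ℕ)/m = (j:ℕ)/m <;> simp [h, hv]
  -- pointwise square identity
  have hpt : ∀ j, (w j - w' j)^2 =
      (v j - (1/(m:ℝ)) *
        ∑ k ∈ Finset.univ.filter (fun k : Fin (t*m) => (k:ℕ)/m = (j:ℕ)/m), v k)^2 := by
    intro j
    have h2 : (u' j)^2 = 1 := by rcases hu' j with h | h <;> rw [h] <;> norm_num
    have hwv : w j = u' j * v j := by
      have : u' j * v j = w j * (u' j)^2 := by rw [hv]; ring
      rw [this, h2, mul_one]
    have key : w j - w' j = u' j * (v j - (1/(m:ℝ)) *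
        ∑ k ∈ Finset.univ.filter (fun k : Fin (t*m) => (k:ℕ)/m = (j:ℕ)/m), v k) := by
      rw [hw'j j]
      nth_rewrite 1 [hwv]
      ring
    rw [key, mul_pow, h2, one_mul]
  -- counters
  set a : Fin t → ℕ := fun p => (Finset.univ.filter (fun j : Fin (t * m) =>
      (j : ℕ) / m = (p : ℕ) ∧ w j * u' j = -1)).card with haa
  -- total sum
  have hsum : ∑ j, (w j - w' j)^2
      = 4 * ((∑ p : Fin t, (a p : ℝ)) - (1/(m:ℝ)) * ∑ p : Fin t, (a p : ℝ)^2) := by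
    rw [Finset.sum_congr rfl (fun j _ => hpt j)]
    rw [← fiber_sum t m]
    have hblock : ∀ p : Fin t,
        ∑ j ∈ Finset.univ.filter (fun j : Fin (t*m) => (j:ℕ)/m = (p:ℕ)),
          (v j - (1/(m:ℝ)) *
            ∑ k ∈ Finset.univ.filter (fun k : Fin (t*m) => (k:ℕ)/m = (j:ℕ)/m), v k)^2
        = 4 * (a p : ℝ) - (4/(m:ℝ)) * (a p : ℝ)^2 := by
      intro p
      have hsame : ∀ j ∈ Finset.univ.filter (fun j : Fin (t*m) => (j:ℕ)/m = (p:ℕ)),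
          (v j - (1/(m:ℝ)) *
            ∑ k ∈ Finset.univ.filter (fun k : Fin (t*m) => (k:ℕ)/m = (j:ℕ)/m), v k)^2
          = (v j - (1/(m:ℝ)) *
            ∑ k ∈ Finset.univ.filter (fun k : Fin (t*m) => (k:ℕ)/m = (p:ℕ)), v k)^2 := by
        intro j hj
        rw [Finset.mem_filter] at hj
        rw [hj.2]
      rw [Finset.sum_congr rfl hsame]
      have := blocksum m hm (Finset.univ.filter (fun j : Fin (t*m) => (j:ℕ)/m = (p:ℕ))) v
        (fun j _ => hvpm j) (block_card t m hm p)
      rw [this, Finset.filter_filter]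
    rw [Finset.sum_congr rfl (fun p _ => hblock p), Finset.sum_sub_distrib,
      ← Finset.mul_sum, ← Finset.mul_sum]
    ring
  -- Hamming distance = sum of a p
  have hd : ((Finset.univ.filter (fun j : Fin (t * m) => w j ≠ u' j)).card : ℝ)
      = ∑ p : Fin t, (a p : ℝ) := by
    rw [← Nat.cast_sum]
    congr 1
    have : (Finset.univ.filter (fun j : Fin (t * m) => w j ≠ u' j)).card
        = ∑ j : Fin (t*m), if w j * u' j = -1 then 1 else 0 := by
      rw [Finset.card_filter]
      refine Finset.sum_congr rfl fun j _ => ?_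
      exact if_congr (neq_iff_mul_neg_one (w j) (u' j) (hw j) (hu' j)) rfl rfl
    rw [this, ← fiber_sum t m]
    refine Finset.sum_congr rfl fun p _ => ?_
    rw [← Finset.card_filter, Finset.filter_filter]
  rw [hsum, hd, hc]
  rw [show (4:ℝ) * ((∑ p : Fin t, (a p : ℝ)) - (1/(m:ℝ)) * ∑ p : Fin t, (a p : ℝ)^2)
      = 4 * ((∑ p : Fin t, (a p : ℝ)) - 1/(m:ℝ) * ∑ p : Fin t, (a p : ℝ)^2) from rfl]
  rw [Real.sqrt_mul (by norm_num : (0:ℝ) ≤ 4)]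
  rw [show (4:ℝ) = 2^2 by norm_num, Real.sqrt_sq (by norm_num : (0:ℝ) ≤ 2)]
end

section
/- For distinct g, g' ∈ Γ, the cosets V ⊕ g = {v ⊕ g : v ∈ V} and V ⊕ g' are disjoint; furthermore, for every r ∈ {±1}^n, the cosets V ⊕ (r ⊕ g) and V ⊕ (r ⊕ g') are disjoint. -/
/-!
Write `x = v ⊕ g = v' ⊕ g'` with `v, v' ∈ V`. Since `V` consists of vectors that are constant
on each block, `g = (v ⊕ v') ⊕ g'` flips either all or none of the entries of `g'` in a block.
Flipping a whole block `S_i` would make the `−1` entries of `g` and `g'` cover `S_i`, which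
is impossible when each of them has fewer than `|S_i| / 2` of them there. Hence `g = g'`.
The shift by `r` cancels, since `r ⊕ r = 1`.
-/

open Finset

theorem ite_neg_one_one_mul_self (p : Prop) [Decidable p] :
    (if p then (-1 : ℝ) else 1) * (if p then -1 else 1) = 1 := by
  split_ifs <;> norm_num

section Blocks

variable {ι κ : Type*} [Fintype ι] [DecidableEq κ]

theorem card_filter_block_le_of_forall_eq_neg (b : ι → κ) (i : κ) {g g' : ι → ℝ}
    (hg' : ∀ j, g' j = 1 ∨ g' j = -1) (hflip : ∀ j, b j = i → g j = -g' j) :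
    #{j | b j = i} ≤ #{j | b j = i ∧ g j = -1} + #{j | b j = i ∧ g' j = -1} := by
  classical
  refine (card_le_card fun j hj => ?_).trans (card_union_le _ _)
  have hji : b j = i := (mem_filter.mp hj).2
  rcases hg' j with h | h
  · exact mem_union_left _ (by simp [hji, hflip j hji, h])
  · exact mem_union_right _ (by simp [hji, h])

theorem eq_of_eq_blockConst_mul (b : ι → κ) {g g' : ι → ℝ}
    (hg : ∀ j, g j = 1 ∨ g j = -1) (hg' : ∀ j, g' j = 1 ∨ g' j = -1)
    (hgc : ∀ i, 2 * #{j | b j = i ∧ g j = -1} < #{j | b j = i})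
    (hg'c : ∀ i, 2 * #{j | b j = i ∧ g' j = -1} < #{j | b j = i})
    (σ : κ → ℝ) (hσ : ∀ j, g j = σ (b j) * g' j) : g = g' := by
  funext j
  by_contra hne
  have hσj : σ (b j) = -1 := by
    rcases hg j with h | h <;> rcases hg' j with h' | h' <;> grind
  have hflip : ∀ j', b j' = b j → g j' = -g' j' := fun j' hj' => by
    rw [hσ j', hj', hσj, neg_one_mul]
  have := card_filter_block_le_of_forall_eq_neg b (b j) hg' hflip
  linarith [hgc (b j), hg'c (b j)]

theorem eq_of_blockSign_mul_eq (b : ι → κ) {g g' : ι → ℝ}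
    (hg : ∀ j, g j = 1 ∨ g j = -1) (hg' : ∀ j, g' j = 1 ∨ g' j = -1)
    (hgc : ∀ i, 2 * #{j | b j = i ∧ g j = -1} < #{j | b j = i})
    (hg'c : ∀ i, 2 * #{j | b j = i ∧ g' j = -1} < #{j | b j = i})
    (r : ι → ℝ) (hr : ∀ j, r j ≠ 0) (T T' : Finset κ)
    (h : ∀ j, (if b j ∈ T then -1 else 1) * (r j * g j) =
      (if b j ∈ T' then -1 else 1) * (r j * g' j)) : g = g' := by
  refine eq_of_eq_blockConst_mul b hg hg' hgc hg'c
    (fun i => (if i ∈ T then -1 else 1) * (if i ∈ T' then -1 else 1)) fun j => ?_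
  apply mul_left_cancel₀ (hr j)
  calc r j * g j
      = (if b j ∈ T then -1 else 1) * ((if b j ∈ T then -1 else 1) * (r j * g j)) := by
        rw [← mul_assoc, ite_neg_one_one_mul_self, one_mul]
    _ = r j * ((if b j ∈ T then -1 else 1) * (if b j ∈ T' then -1 else 1) * g' j) := by
        rw [h]; ring

end Blocks

theorem Fin.divNat_eq_iff {t m : ℕ} (j : Fin (t * m)) (i : Fin t) :
    j.divNat = i ↔ (j : ℕ) / m = i := by
  rw [Fin.ext_iff, Fin.coe_divNat]

theorem Fin.card_filter_divNat_eq {t m : ℕ} (i : Fin t) :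
    #{j : Fin (t * m) | j.divNat = i} = m := by
  have hblock : ({j : Fin (t * m) | j.divNat = i} : Finset _) =
      univ.image fun k : Fin m => finProdFinEquiv (i, k) := by
    ext j
    simp only [mem_filter, mem_univ, true_and, mem_image]
    constructor
    · rintro rfl
      exact ⟨j.modNat, finProdFinEquiv.apply_symm_apply j⟩
    · rintro ⟨k, rfl⟩
      exact congrArg Prod.fst (finProdFinEquiv.symm_apply_apply (i, k))
  rw [hblock, card_image_of_injective _ fun k k' hk => by simpa using hk, card_fin]

theorem two_mul_lt_of_lt_div {t m c : ℕ} (ht : 0 < t)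
    (hc : (c : ℝ) < ((t * m : ℕ) : ℝ) / (2 * t)) : 2 * c < m := by
  have hct : (c : ℝ) * (2 * t) < t * m := by
    rw [Nat.cast_mul] at hc
    exact (lt_div_iff₀ (by positivity)).mp hc
  have hct' : ((2 * c : ℕ) : ℝ) * t < m * t := by push_cast; linarith
  exact_mod_cast lt_of_mul_lt_mul_right hct' (by positivity)

theorem prod_ite_div_eq_ite_divNat_mem {t m : ℕ} (T : Finset (Fin t)) (j : Fin (t * m)) :
    ∏ i ∈ T, (if (j : ℕ) / m = (i : ℕ) then (-1 : ℝ) else 1) =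
      if j.divNat ∈ T then -1 else 1 := by
  simp only [← Fin.divNat_eq_iff, prod_ite_eq]

theorem two_mul_card_filter_divNat_lt {t m : ℕ} {f : Fin (t * m) → ℝ} (i : Fin t)
    (hf : (#{j : Fin (t * m) | (j : ℕ) / m = (i : ℕ) ∧ f j = -1} : ℝ) <
      ((t * m : ℕ) : ℝ) / (2 * t)) :
    2 * #{j : Fin (t * m) | j.divNat = i ∧ f j = -1} < #{j : Fin (t * m) | j.divNat = i} := by
  rw [Fin.card_filter_divNat_eq]
  simp_rw [Fin.divNat_eq_iff]
  exact two_mul_lt_of_lt_div i.pos hf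

theorem stmt7_general (t m : ℕ)
    (h : ℕ)
    (V : Set (Fin (t * m) → ℝ))
    (hV : ∀ v, v ∈ V ↔ ∃ T : Finset (Fin t),
      ∀ j : Fin (t * m), v j = ∏ i ∈ T, (if (j : ℕ) / m = (i : ℕ) then (-1 : ℝ) else 1))
    (Γ : Set (Fin (t * m) → ℝ))
    (hΓ : ∀ g, g ∈ Γ ↔
      (∀ j, g j = 1 ∨ g j = -1) ∧
      (Finset.univ.filter (fun j : Fin (t * m) => g j = -1)).card ≤ h ∧
      ∀ i : Fin t,
        (((Finset.univ.filter (fun j : Fin (t * m) =>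
            (j : ℕ) / m = (i : ℕ) ∧ g j = -1)).card : ℝ) < ((t * m : ℕ) : ℝ) / (2 * t))) :
    ∀ g ∈ Γ, ∀ g' ∈ Γ, g ≠ g' →
      (Disjoint {x | ∃ v ∈ V, x = fun j => v j * g j}
                {x | ∃ v ∈ V, x = fun j => v j * g' j}) ∧
      (∀ r : Fin (t * m) → ℝ, (∀ j, r j = 1 ∨ r j = -1) →
        Disjoint {x | ∃ v ∈ V, x = fun j => v j * (r j * g j)}
                 {x | ∃ v ∈ V, x = fun j => v j * (r j * g' j)}) := by
  intro g hg g' hg' hne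
  obtain ⟨hg1, -, hgc⟩ := (hΓ g).mp hg
  obtain ⟨hg'1, -, hg'c⟩ := (hΓ g').mp hg'
  have hcosets : ∀ r : Fin (t * m) → ℝ, (∀ j, r j ≠ 0) →
      Disjoint {x | ∃ v ∈ V, x = fun j => v j * (r j * g j)}
               {x | ∃ v ∈ V, x = fun j => v j * (r j * g' j)} := by
    intro r hr
    rw [Set.disjoint_left]
    rintro x ⟨v, hv, rfl⟩ ⟨v', hv', hx⟩
    obtain ⟨T, hT⟩ := (hV v).mp hv
    obtain ⟨T', hT'⟩ := (hV v').mp hv'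
    refine hne (eq_of_blockSign_mul_eq Fin.divNat hg1 hg'1
      (fun i => two_mul_card_filter_divNat_lt i (hgc i))
      (fun i => two_mul_card_filter_divNat_lt i (hg'c i)) r hr T T' fun j => ?_)
    simpa only [hT, hT', prod_ite_div_eq_ite_divNat_mem] using congrFun hx j
  refine ⟨by simpa only [Pi.one_apply, one_mul] using hcosets 1 fun _ => one_ne_zero,
    fun r hr => hcosets r fun j => ?_⟩
  rcases hr j with hrj | hrj <;> simp [hrj]

/-- Let V ⊆ {±1}^n be the 𝔽₂-span of the block indicators 1_{S_1},…,1_{S_t}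
(𝔽₂-addition ⊕ being componentwise real multiplication), and for an integer h with
0 ≤ h ≤ n/2 let Γ be the set of all g ∈ {±1}^n with w_H(g) ≤ h and fewer than n/(2t)
entries equal to −1 in each block S_i. For distinct g, g' ∈ Γ the cosets V ⊕ g and
V ⊕ g' are disjoint; furthermore, for every r ∈ {±1}^n the cosets V ⊕ (r ⊕ g) and
V ⊕ (r ⊕ g') are disjoint. -/
theorem stmt7 (t m : ℕ) (ht : 0 < t) (hm : 0 < m)
    (h : ℕ) (hh : (h : ℝ) ≤ ((t * m : ℕ) : ℝ) / 2)
    (V : Set (Fin (t * m) → ℝ))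
    (hV : ∀ v, v ∈ V ↔ ∃ T : Finset (Fin t),
      ∀ j : Fin (t * m), v j = ∏ i ∈ T, (if (j : ℕ) / m = (i : ℕ) then (-1 : ℝ) else 1))
    (Γ : Set (Fin (t * m) → ℝ))
    (hΓ : ∀ g, g ∈ Γ ↔
      (∀ j, g j = 1 ∨ g j = -1) ∧
      (Finset.univ.filter (fun j : Fin (t * m) => g j = -1)).card ≤ h ∧
      ∀ i : Fin t,
        (((Finset.univ.filter (fun j : Fin (t * m) =>
            (j : ℕ) / m = (i : ℕ) ∧ g j = -1)).card : ℝ) < ((t * m : ℕ) : ℝ) / (2 * t))) :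
    ∀ g ∈ Γ, ∀ g' ∈ Γ, g ≠ g' →
      (Disjoint {x | ∃ v ∈ V, x = fun j => v j * g j}
                {x | ∃ v ∈ V, x = fun j => v j * g' j}) ∧
      (∀ r : Fin (t * m) → ℝ, (∀ j, r j = 1 ∨ r j = -1) →
        Disjoint {x | ∃ v ∈ V, x = fun j => v j * (r j * g j)}
                 {x | ∃ v ∈ V, x = fun j => v j * (r j * g' j)}) :=
  stmt7_general t m h V hV Γ hΓ
end

section
/- Let n and t be positive integers and let h be a real number with 0 ≤ h ≤ n/2. For all real numbers d_1,…,d_t ≥ 0 with ∑_{i=1}^t d_i ≤ h, it holds that ∑_{i=1}^t ( d_i − (t/n)·d_i² ) ≤ h·(1 − h/n). -/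
open Finset

/-- Let n and t be positive integers and let h be a real number with
0 ≤ h ≤ n/2. For all real numbers d_1,…,d_t ≥ 0 with ∑_{i=1}^t d_i ≤ h, it holds that
∑_{i=1}^t ( d_i − (t/n)·d_i² ) ≤ h·(1 − h/n). -/
theorem stmt8 (n t : ℕ) (hn : 0 < n) (ht : 0 < t) (h : ℝ)
    (hh0 : 0 ≤ h) (hh : h ≤ (n : ℝ) / 2)
    (d : Fin t → ℝ) (hd : ∀ i, 0 ≤ d i) (hsum : ∑ i, d i ≤ h) :
    ∑ i, (d i - ((t : ℝ) / (n : ℝ)) * (d i) ^ 2) ≤ h * (1 - h / (n : ℝ)) := by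
  have hcs : (∑ i, d i) ^ 2 ≤ (t : ℝ) * ∑ i, d i ^ 2 := by
    have := sq_sum_le_card_mul_sum_sq (s := Finset.univ) (f := d)
    simpa using this
  set S := ∑ i, d i with hS
  have hS0 : 0 ≤ S := Finset.sum_nonneg fun i _ => hd i
  have hnpos : (0 : ℝ) < n := by exact_mod_cast hn
  have htpos : (0 : ℝ) < t := by exact_mod_cast ht
  have hsplit : ∑ i, (d i - ((t : ℝ) / (n : ℝ)) * (d i) ^ 2)
      = S - ((t : ℝ) / (n : ℝ)) * ∑ i, d i ^ 2 := by
    rw [Finset.sum_sub_distrib, Finset.mul_sum]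
  rw [hsplit]
  have h1 : S - ((t : ℝ) / (n : ℝ)) * ∑ i, d i ^ 2 ≤ S - S ^ 2 / n := by
    have hq : S ^ 2 / n ≤ ((t : ℝ) * ∑ i, d i ^ 2) / n := by gcongr
    rw [div_mul_eq_mul_div]
    linarith
  have h2 : S - S ^ 2 / n ≤ h * (1 - h / n) := by
    have e1 : S - S ^ 2 / n = (S * n - S ^ 2) / n := by field_simp
    have e2 : h * (1 - h / n) = (h * n - h ^ 2) / n := by field_simp
    rw [e1, e2]
    have key : S * n - S ^ 2 ≤ h * n - h ^ 2 := by nlinarith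
    exact (div_le_div_iff_of_pos_right hnpos).mpr key
  linarith
end

section
/- Let w ∈ {±1}^n, let g ∈ Γ, set u' = w ⊕ g, and define w' = (t/n)·w·diag(u')·diag(J_{n/t},…,J_{n/t})·diag(u'). Then for every x ∈ ℝ^n, |w'·xᵀ − w·xᵀ| ≤ 2·‖x‖₂·√( h·(1 − h/n) ). -/
open Finset Matrix

/-- Let w ∈ {±1}^n, g ∈ Γ (i.e. g ∈ {±1}^n with w_H(g) ≤ h and fewer than
n/(2t) entries −1 per block), set u' = w ⊕ g, and define
w' = (t/n)·w·diag(u')·diag(J_{n/t},…,J_{n/t})·diag(u'). Then for every x ∈ ℝ^n,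
|w'·xᵀ − w·xᵀ| ≤ 2·‖x‖₂·√( h·(1 − h/n) ). -/
theorem stmt9 (t m : ℕ) (ht : 0 < t) (hm : 0 < m)
    (h : ℕ) (hh : (h : ℝ) ≤ ((t * m : ℕ) : ℝ) / 2)
    (Γ : Set (Fin (t * m) → ℝ))
    (hΓ : ∀ g, g ∈ Γ ↔
      (∀ j, g j = 1 ∨ g j = -1) ∧
      (Finset.univ.filter (fun j : Fin (t * m) => g j = -1)).card ≤ h ∧
      ∀ i : Fin t,
        (((Finset.univ.filter (fun j : Fin (t * m) =>
            (j : ℕ) / m = (i : ℕ) ∧ g j = -1)).card : ℝ) < ((t * m : ℕ) : ℝ) / (2 * t)))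
    (w : Fin (t * m) → ℝ) (hw : ∀ j, w j = 1 ∨ w j = -1)
    (g : Fin (t * m) → ℝ) (hg : g ∈ Γ)
    (u' : Fin (t * m) → ℝ) (hu' : u' = fun j => w j * g j)
    (B : Matrix (Fin (t * m)) (Fin (t * m)) ℝ)
    (hB : ∀ j k, B j k = if (j : ℕ) / m = (k : ℕ) / m then 1 else 0)
    (w' : Fin (t * m) → ℝ)
    (hw' : w' = ((t : ℝ) / ((t * m : ℕ) : ℝ)) •
      Matrix.vecMul (Matrix.vecMul (Matrix.vecMul w (Matrix.diagonal u')) B)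
        (Matrix.diagonal u')) :
    ∀ x : Fin (t * m) → ℝ,
      |(∑ j, w' j * x j) - (∑ j, w j * x j)| ≤
        2 * Real.sqrt (∑ j, (x j) ^ 2) *
          Real.sqrt ((h : ℝ) * (1 - (h : ℝ) / ((t * m : ℕ) : ℝ))) := by
  classical
  obtain ⟨hg1, hg2, -⟩ := (hΓ g).mp hg
  intro x
  have hmR : (0:ℝ) < (m:ℝ) := by exact_mod_cast hm
  have htR : (0:ℝ) < (t:ℝ) := by exact_mod_cast ht
  have hnR : (0:ℝ) < ((t*m : ℕ):ℝ) := by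
    exact_mod_cast Nat.mul_pos ht hm
  have hcast : ((t*m : ℕ):ℝ) = (t:ℝ) * (m:ℝ) := by push_cast; ring
  set a : ℕ → ℕ := fun i =>
    (Finset.univ.filter (fun j : Fin (t*m) => (j:ℕ)/m = i ∧ g j = -1)).card with ha
  set blk : ℕ → Finset (Fin (t*m)) := fun i =>
    Finset.univ.filter (fun j : Fin (t*m) => (j:ℕ)/m = i) with hblk
  have hdivlt : ∀ j : Fin (t*m), (j:ℕ)/m < t := by
    intro j
    exact Nat.div_lt_iff_lt_mul hm |>.mpr j.isLt
  -- cardinality of each block is m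
  have card_blk : ∀ i : ℕ, i < t → (blk i).card = m := by
    intro i hi
    refine Eq.trans (Finset.card_bij' (fun (j : Fin (t*m)) _ => (j:ℕ) % m)
      ?_ ?_ ?_ ?_ ?_) (Finset.card_range m)
    · exact fun (y : ℕ) (hy : y ∈ Finset.range m) =>
        (⟨m*i + y, by
          have hy' : y < m := Finset.mem_range.mp hy
          calc m*i + y < m*i + m := by omega
            _ = m*(i+1) := by ring
            _ ≤ m*t := Nat.mul_le_mul_left m hi
            _ = t*m := Nat.mul_comm m t⟩ : Fin (t*m))
    · intro j hj
      exact Finset.mem_range.mpr (Nat.mod_lt _ hm)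
    · intro y hy
      have hy' : y < m := Finset.mem_range.mp hy
      simp only [hblk, Finset.mem_filter, Finset.mem_univ, true_and]
      show (m*i + y)/m = i
      rw [Nat.mul_add_div hm, Nat.div_eq_of_lt hy']
      omega
    · intro j hj
      have hjm : (j:ℕ)/m = i := (Finset.mem_filter.mp hj).2
      apply Fin.ext
      show m*i + (j:ℕ) % m = (j:ℕ)
      rw [← hjm]
      exact Nat.div_add_mod (j:ℕ) m
    · intro y hy
      have hy' : y < m := Finset.mem_range.mp hy
      show (m*i + y) % m = y
      rw [Nat.mul_add_mod, Nat.mod_eq_of_lt hy']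
  -- count of -1 within a block
  have c1 : ∀ i : ℕ, ((blk i).filter (fun j => g j = -1)).card = a i := by
    intro i
    rw [ha, hblk]
    congr 1
    simp [Finset.filter_filter]
  have hale : ∀ i : ℕ, i < t → a i ≤ m := by
    intro i hi
    rw [← card_blk i hi, ← c1 i]
    exact Finset.card_filter_le _ _
  -- sum of squares over a block
  have hwu : ∀ k, w k * u' k = g k := by
    intro k; rcases hw k with h1|h1 <;> simp [hu', h1]
  have hw'j : ∀ j : Fin (t*m),
      w' j = (((m:ℝ) - 2 * a ((j:ℕ)/m)) / m) * (w j * g j) := by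
    intro j
    have e0 : Matrix.vecMul w (Matrix.diagonal u') = g := by
      funext k
      rw [Matrix.vecMul_diagonal]
      exact hwu k
    have e2 : Matrix.vecMul g B j = ((m:ℝ) - 2 * a ((j:ℕ)/m)) := by
      have e21 : Matrix.vecMul g B j = ∑ k ∈ blk ((j:ℕ)/m), g k := by
        simp only [Matrix.vecMul, dotProduct, hB, mul_ite, mul_one, mul_zero]
        rw [hblk]
        exact (Finset.sum_filter _ _).symm
      rw [e21]
      -- sum of g over a block equals m - 2 * a i
      have hi : (j:ℕ)/m < t := hdivlt j
      set i := (j:ℕ)/m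
      have ctot := Finset.card_filter_add_card_filter_not
        (s := blk i) (p := fun j => g j = -1)
      have c2 : ((blk i).filter (fun j => ¬ g j = -1)).card = m - a i := by
        have := c1 i
        have := card_blk i hi
        omega
      rw [← Finset.sum_filter_add_sum_filter_not (blk i) (fun j => g j = -1)]
      have s1 : ∑ j ∈ (blk i).filter (fun j => g j = -1), g j = -(a i : ℝ) := by
        rw [Finset.sum_congr rfl (fun j hj => (Finset.mem_filter.mp hj).2),
          Finset.sum_const, c1 i]
        simp
      have s2 : ∑ j ∈ (blk i).filter (fun j => ¬ g j = -1), g j = ((m - a i : ℕ) : ℝ) := by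
        have : ∀ j ∈ (blk i).filter (fun j => ¬ g j = -1), g j = 1 := by
          intro j hj
          rcases hg1 j with h1|h1
          · exact h1
          · exact absurd h1 (Finset.mem_filter.mp hj).2
        rw [Finset.sum_congr rfl this, Finset.sum_const, c2]
        simp
      rw [s1, s2, Nat.cast_sub (hale i hi)]
      ring
    rw [hw', Pi.smul_apply, smul_eq_mul, Matrix.vecMul_diagonal, e0, e2, hu']
    simp only
    rw [hcast]
    field_simp
  -- pointwise square of the difference
  have hds : ∀ j : Fin (t*m), (w' j - w j)^2 =
      if g j = -1 then (2 - 2*((a ((j:ℕ)/m)):ℝ)/m)^2 else (2*((a ((j:ℕ)/m)):ℝ)/m)^2 := by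
    intro j
    rcases hg1 j with h1|h1
    · rw [if_neg (by rw [h1]; norm_num)]
      rcases hw j with h2|h2 <;> rw [hw'j j, h1, h2] <;> field_simp <;> ring
    · rw [if_pos h1]
      rcases hw j with h2|h2 <;> rw [hw'j j, h1, h2] <;> field_simp <;> ring
  -- sum over a block
  have blocksq : ∀ i : ℕ, i < t →
      ∑ j ∈ blk i, (w' j - w j)^2 = 4 * (a i:ℝ) * ((m:ℝ) - a i) / m := by
    intro i hi
    have step : ∑ j ∈ blk i, (w' j - w j)^2
        = ∑ j ∈ blk i, (if g j = -1 then (2 - 2*((a i):ℝ)/m)^2 else (2*((a i):ℝ)/m)^2) := by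
      apply Finset.sum_congr rfl
      intro j hj
      have hjm : (j:ℕ)/m = i := (Finset.mem_filter.mp hj).2
      rw [hds j, hjm]
    have ctot := Finset.card_filter_add_card_filter_not
      (s := blk i) (p := fun j => g j = -1)
    have c2 : ((blk i).filter (fun j => ¬ g j = -1)).card = m - a i := by
      have := c1 i
      have := card_blk i hi
      omega
    rw [step, Finset.sum_ite, Finset.sum_const, Finset.sum_const, c1 i, c2,
      nsmul_eq_mul, nsmul_eq_mul, Nat.cast_sub (hale i hi)]
    have hA : (0:ℝ) ≤ (a i : ℝ) := Nat.cast_nonneg _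
    field_simp
    ring
  -- total sum of squares
  have total : ∑ j, (w' j - w j)^2
      = ∑ i ∈ Finset.range t, (4 * (a i:ℝ) * ((m:ℝ) - a i) / m) := by
    rw [← Finset.sum_fiberwise_of_maps_to (t := Finset.range t)
      (g := fun j : Fin (t*m) => (j:ℕ)/m)
      (fun j _ => Finset.mem_range.mpr (hdivlt j)) (fun j => (w' j - w j)^2)]
    apply Finset.sum_congr rfl
    intro i hi
    exact blocksq i (Finset.mem_range.mp hi)
  -- the total count is at most h
  have hAN : ∑ i ∈ Finset.range t, a i ≤ h := by
    have e : ∀ i ∈ Finset.range t,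
        ((Finset.univ.filter (fun j : Fin (t*m) => g j = -1)).filter
          (fun (j : Fin (t*m)) => (j:ℕ)/m = i)).card = a i := by
      intro i _
      have hset : (Finset.univ.filter (fun j : Fin (t*m) => g j = -1)).filter
          (fun (j : Fin (t*m)) => (j:ℕ)/m = i)
          = Finset.univ.filter (fun j : Fin (t*m) => (j:ℕ)/m = i ∧ g j = -1) := by
        rw [Finset.filter_filter]
        exact Finset.filter_congr (fun j _ => by
          constructor
          · exact fun ⟨p, q⟩ => ⟨q, p⟩
          · exact fun ⟨p, q⟩ => ⟨q, p⟩)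
      rw [hset]
    have key : (Finset.univ.filter (fun j : Fin (t*m) => g j = -1)).card
        = ∑ i ∈ Finset.range t, a i := by
      rw [Finset.card_eq_sum_card_fiberwise
        (f := fun j : Fin (t*m) => (j:ℕ)/m) (t := Finset.range t)
        (fun j _ => Finset.mem_range.mpr (hdivlt j))]
      exact Finset.sum_congr rfl e
    omega
  -- bound the total sum of squares
  have sqbound : ∑ j, (w' j - w j)^2
      ≤ 4 * ((h:ℝ) * (1 - (h:ℝ)/((t*m:ℕ):ℝ))) := by
    rw [total]
    set A : ℝ := ∑ i ∈ Finset.range t, (a i : ℝ) with hA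
    set Q : ℝ := ∑ i ∈ Finset.range t, ((a i : ℝ))^2 with hQdef
    have hQ : A^2 ≤ (t:ℝ) * Q := by
      have := sq_sum_le_card_mul_sum_sq (s := Finset.range t) (f := fun i => ((a i : ℝ)))
      simpa [hA, hQdef] using this
    have hsum : ∑ i ∈ Finset.range t, (4 * (a i:ℝ) * ((m:ℝ) - a i) / m)
        = (4*(m:ℝ)*A - 4*Q)/m := by
      rw [← Finset.sum_div]
      congr 1
      have e : ∀ i ∈ Finset.range t,
          4 * (a i:ℝ) * ((m:ℝ) - a i) = 4*(m:ℝ)*(a i:ℝ) - 4*((a i:ℝ))^2 :=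
        fun i _ => by ring
      rw [Finset.sum_congr rfl e, Finset.sum_sub_distrib, hA, hQdef,
        Finset.mul_sum, Finset.mul_sum]
    have hAh : A ≤ (h:ℝ) := by
      rw [hA, ← Nat.cast_sum]
      exact_mod_cast hAN
    have hA0 : (0:ℝ) ≤ A := Finset.sum_nonneg (fun i _ => Nat.cast_nonneg _)
    have hh' : (h:ℝ) ≤ (t:ℝ)*(m:ℝ)/2 := by rw [← hcast]; exact hh
    have expand : 4 * ((h:ℝ) * (1 - (h:ℝ)/((t*m:ℕ):ℝ)))
        = (4*(h:ℝ)*((t:ℝ)*(m:ℝ)) - 4*(h:ℝ)^2)/((t:ℝ)*(m:ℝ)) := by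
      rw [hcast]
      field_simp
    rw [hsum, expand, div_le_div_iff₀ hmR (by positivity)]
    nlinarith [hQ, mul_nonneg (mul_nonneg hmR.le (sub_nonneg.2 hAh))
      (by nlinarith : (0:ℝ) ≤ (t:ℝ)*(m:ℝ) - (h:ℝ) - A), sq_nonneg (A - (h:ℝ))]
  -- Cauchy-Schwarz and conclusion
  have hrw : (∑ j, w' j * x j) - (∑ j, w j * x j) = ∑ j, (w' j - w j) * x j := by
    rw [← Finset.sum_sub_distrib]
    apply Finset.sum_congr rfl
    intro j _
    ring
  have hCS : ∀ d : Fin (t*m) → ℝ,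
      ∑ j, d j * x j ≤ Real.sqrt (∑ j, (d j)^2) * Real.sqrt (∑ j, (x j)^2) :=
    fun d => Real.sum_mul_le_sqrt_mul_sqrt Finset.univ d x
  have hy0 : (0:ℝ) ≤ (h:ℝ) * (1 - (h:ℝ)/((t*m:ℕ):ℝ)) := by
    have : (h:ℝ)/((t*m:ℕ):ℝ) ≤ 1 := by
      rw [div_le_one hnR]
      linarith
    have h0 : (0:ℝ) ≤ (h:ℝ) := Nat.cast_nonneg _
    nlinarith
  have hsqrtle : Real.sqrt (∑ j, (w' j - w j)^2)
      ≤ 2 * Real.sqrt ((h:ℝ) * (1 - (h:ℝ)/((t*m:ℕ):ℝ))) := by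
    calc Real.sqrt (∑ j, (w' j - w j)^2)
        ≤ Real.sqrt (4 * ((h:ℝ) * (1 - (h:ℝ)/((t*m:ℕ):ℝ)))) := Real.sqrt_le_sqrt sqbound
      _ = 2 * Real.sqrt ((h:ℝ) * (1 - (h:ℝ)/((t*m:ℕ):ℝ))) := by
          rw [show (4:ℝ) * ((h:ℝ) * (1 - (h:ℝ)/((t*m:ℕ):ℝ)))
            = 2^2 * ((h:ℝ) * (1 - (h:ℝ)/((t*m:ℕ):ℝ))) by ring,
            Real.sqrt_mul (by positivity), Real.sqrt_sq (by norm_num)]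
  have habs : |∑ j, (w' j - w j) * x j|
      ≤ Real.sqrt (∑ j, (w' j - w j)^2) * Real.sqrt (∑ j, (x j)^2) := by
    rw [abs_le]
    constructor
    · have h2 := hCS (fun j => -(w' j - w j))
      simp only [neg_mul, Finset.sum_neg_distrib, neg_sq] at h2
      linarith
    · exact hCS _
  have hstep : Real.sqrt (∑ j, (w' j - w j)^2) * Real.sqrt (∑ j, (x j)^2)
      ≤ (2 * Real.sqrt ((h:ℝ) * (1 - (h:ℝ)/((t*m:ℕ):ℝ)))) * Real.sqrt (∑ j, (x j)^2) :=
    mul_le_mul_of_nonneg_right hsqrtle (Real.sqrt_nonneg _)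
  rw [hrw]
  calc |∑ j, (w' j - w j) * x j|
      ≤ Real.sqrt (∑ j, (w' j - w j)^2) * Real.sqrt (∑ j, (x j)^2) := habs
    _ ≤ (2 * Real.sqrt ((h:ℝ) * (1 - (h:ℝ)/((t*m:ℕ):ℝ)))) * Real.sqrt (∑ j, (x j)^2) := hstep
    _ = 2 * Real.sqrt (∑ j, (x j)^2)
        * Real.sqrt ((h:ℝ) * (1 - (h:ℝ)/((t*m:ℕ):ℝ))) := by ring
end

section
/- For every fixed r ∈ {±1}^n, the cosets {V ⊕ (r ⊕ g)}_{g∈Γ} are pairwise disjoint, each has cardinality 2^t, and consequently the union ⋃_{g∈Γ} (V ⊕ (r ⊕ g)) has cardinality 2^t·|Γ|. -/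
open Finset

/-- With V the 𝔽₂-span of the block indicators 1_{S_1},…,1_{S_t} and Γ as
in the approximate private inference scheme, for every fixed r ∈ {±1}^n the cosets
{V ⊕ (r ⊕ g)}_{g∈Γ} are pairwise disjoint, each has cardinality 2^t, and the union
⋃_{g∈Γ} (V ⊕ (r ⊕ g)) has cardinality 2^t·|Γ|. -/
theorem stmt10 (t m : ℕ) (ht : 0 < t) (hm : 0 < m)
    (h : ℕ) (hh : (h : ℝ) ≤ ((t * m : ℕ) : ℝ) / 2)
    (V : Set (Fin (t * m) → ℝ))
    (hV : ∀ v, v ∈ V ↔ ∃ T : Finset (Fin t),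
      ∀ j : Fin (t * m), v j = ∏ i ∈ T, (if (j : ℕ) / m = (i : ℕ) then (-1 : ℝ) else 1))
    (Γ : Set (Fin (t * m) → ℝ))
    (hΓ : ∀ g, g ∈ Γ ↔
      (∀ j, g j = 1 ∨ g j = -1) ∧
      (Finset.univ.filter (fun j : Fin (t * m) => g j = -1)).card ≤ h ∧
      ∀ i : Fin t,
        (((Finset.univ.filter (fun j : Fin (t * m) =>
            (j : ℕ) / m = (i : ℕ) ∧ g j = -1)).card : ℝ) < ((t * m : ℕ) : ℝ) / (2 * t)))
    (r : Fin (t * m) → ℝ) (hr : ∀ j, r j = 1 ∨ r j = -1)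
    (coset : (Fin (t * m) → ℝ) → Set (Fin (t * m) → ℝ))
    (hcoset : ∀ a, coset a = {x | ∃ v ∈ V, x = fun j => v j * a j}) :
    (∀ g ∈ Γ, ∀ g' ∈ Γ, g ≠ g' →
      Disjoint (coset (fun j => r j * g j)) (coset (fun j => r j * g' j))) ∧
    (∀ g ∈ Γ, (coset (fun j => r j * g j)).ncard = 2 ^ t) ∧
    (⋃ g ∈ Γ, coset (fun j => r j * g j)).ncard = 2 ^ t * Γ.ncard := by
  classical
  -- the block index of a coordinate
  have hblt : ∀ j : Fin (t * m), (j : ℕ) / m < t := fun j =>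
    (Nat.div_lt_iff_lt_mul hm).mpr j.isLt
  set blk : Fin (t * m) → Fin t := fun j => ⟨(j : ℕ) / m, hblt j⟩ with hblk
  set fV : Finset (Fin t) → (Fin (t * m) → ℝ) :=
    fun T j => if blk j ∈ T then (-1 : ℝ) else 1 with hfV
  have hprod : ∀ (T : Finset (Fin t)) (j : Fin (t * m)),
      (∏ i ∈ T, (if (j : ℕ) / m = (i : ℕ) then (-1 : ℝ) else 1)) = fV T j := by
    intro T j
    have : ∀ i ∈ T, (if (j : ℕ) / m = (i : ℕ) then (-1 : ℝ) else 1)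
        = (if blk j = i then (-1 : ℝ) else 1) := by
      intro i _
      congr 1
      simp [hblk, Fin.ext_iff]
    rw [Finset.prod_congr rfl this, Finset.prod_ite_eq T (blk j) (fun _ => (-1 : ℝ))]
  have hVchar : ∀ v, v ∈ V ↔ ∃ T : Finset (Fin t), v = fV T := by
    intro v
    rw [hV v]
    constructor
    · rintro ⟨T, hT⟩
      exact ⟨T, funext fun j => by rw [hT j, hprod]⟩
    · rintro ⟨T, rfl⟩
      exact ⟨T, fun j => (hprod T j).symm⟩
  have hfVpm : ∀ T j, fV T j = 1 ∨ fV T j = -1 := by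
    intro T j
    by_cases hb : blk j ∈ T <;> simp [hfV, hb]
  have hVval : ∀ v ∈ V, ∀ j, v j = 1 ∨ v j = -1 := by
    intro v hv j
    obtain ⟨T, rfl⟩ := (hVchar v).1 hv
    exact hfVpm T j
  -- injectivity of fV
  have hji : ∀ i : Fin t, ∃ j : Fin (t * m), blk j = i := by
    intro i
    have hlt : (i : ℕ) * m < t * m := by
      have := i.isLt
      exact (Nat.mul_lt_mul_right hm).mpr this
    refine ⟨⟨(i : ℕ) * m, hlt⟩, ?_⟩
    simp [hblk, Fin.ext_iff, Nat.mul_div_cancel _ hm]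
  have hkey : ∀ (b b' : Prop) [Decidable b] [Decidable b'],
      (if b then (-1 : ℝ) else 1) = (if b' then (-1 : ℝ) else 1) → (b ↔ b') := by
    intro b b' _ _ hbb
    constructor <;> intro hx <;> by_contra hy <;> norm_num [hx, hy] at hbb
  have hfVinj : Function.Injective fV := by
    intro T T' hTT
    ext i
    obtain ⟨j, rfl⟩ := hji i
    exact hkey _ _ (congrFun hTT j)
  have hVrange : V = Set.range fV := by
    ext v
    rw [hVchar]
    exact ⟨fun ⟨T, hT⟩ => ⟨T, hT.symm⟩, fun ⟨T, hT⟩ => ⟨T, hT.symm⟩⟩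
  have hVcard : V.ncard = 2 ^ t := by
    rw [hVrange, ← Nat.card_coe_set_eq, Nat.card_range_of_injective hfVinj,
      Nat.card_eq_fintype_card, Fintype.card_finset, Fintype.card_fin]
  have hVfin : V.Finite := hVrange ▸ Set.finite_range fV
  -- cosets as images
  have hcosetimg : ∀ a, coset a = (fun v => fun j => v j * a j) '' V := by
    intro a
    rw [hcoset a]
    ext x
    simp only [Set.mem_setOf_eq, Set.mem_image]
    exact ⟨fun ⟨v, hv, hx⟩ => ⟨v, hv, hx.symm⟩, fun ⟨v, hv, hx⟩ => ⟨v, hv, hx.symm⟩⟩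
  have hmulinj : ∀ a : Fin (t * m) → ℝ, (∀ j, a j ≠ 0) →
      Function.Injective (fun v : Fin (t * m) → ℝ => fun j => v j * a j) := by
    intro a ha v v' hvv
    ext j
    have := congrFun hvv j
    exact mul_right_cancel₀ (ha j) this
  have hpmne : ∀ x : ℝ, (x = 1 ∨ x = -1) → x ≠ 0 := by
    rintro x (rfl | rfl) <;> norm_num
  have hcosetcard : ∀ a : Fin (t * m) → ℝ, (∀ j, a j ≠ 0) → (coset a).ncard = 2 ^ t := by
    intro a ha
    rw [hcosetimg a, Set.ncard_image_of_injective V (hmulinj a ha), hVcard]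
  have hcosetfin : ∀ a, (coset a).Finite := by
    intro a
    rw [hcosetimg a]
    exact hVfin.image _
  -- block cardinality lower bound
  have hblockcard : ∀ i : Fin t, m ≤ (Finset.univ.filter (fun j : Fin (t * m) => blk j = i)).card := by
    intro i
    have : ((Finset.univ : Finset (Fin m)).card) ≤
        (Finset.univ.filter (fun j : Fin (t * m) => blk j = i)).card := by
      apply Finset.card_le_card_of_injOn
        (fun k => ⟨(i : ℕ) * m + (k : ℕ), by
          have h1 := i.isLt; have h2 := k.isLt
          calc (i : ℕ) * m + (k : ℕ) < (i : ℕ) * m + m := by omega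
          _ = ((i : ℕ) + 1) * m := by ring
          _ ≤ t * m := Nat.mul_le_mul_right m (by omega)⟩)
      · intro k _
        simp only [Finset.mem_filter, Finset.mem_univ, true_and]
        have : ((i : ℕ) * m + (k : ℕ)) / m = (i : ℕ) := by
          rw [show (i : ℕ) * m + (k : ℕ) = (k : ℕ) + m * (i : ℕ) by ring,
            Nat.add_mul_div_left _ _ hm, Nat.div_eq_of_lt k.isLt]
          omega
        simp [hblk, Fin.ext_iff, this]
      · intro k _ k' _ hkk
        simp only [Fin.mk.injEq] at hkk
        exact Fin.ext (by omega)
    simpa using this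
  -- key disjointness
  have hdisj : ∀ g ∈ Γ, ∀ g' ∈ Γ, g ≠ g' →
      Disjoint (coset (fun j => r j * g j)) (coset (fun j => r j * g' j)) := by
    intro g hg g' hg' hne
    obtain ⟨hgpm, -, hgblk⟩ := (hΓ g).1 hg
    obtain ⟨hg'pm, -, hg'blk⟩ := (hΓ g').1 hg'
    rw [Set.disjoint_left]
    rintro x hx hx'
    rw [hcoset] at hx hx'
    obtain ⟨v, hvV, rfl⟩ := hx
    obtain ⟨v', hv'V, hx'⟩ := hx'
    have heq : ∀ j, v j * (r j * g j) = v' j * (r j * g' j) := fun j => congrFun hx' j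
    have hcancel : ∀ j, v j * g j = v' j * g' j := by
      intro j
      have hr0 := hpmne _ (hr j)
      have := heq j
      have h2 : r j * (v j * g j) = r j * (v' j * g' j) := by ring_nf; ring_nf at this; linarith
      exact mul_left_cancel₀ hr0 h2
    have hsq : ∀ x : ℝ, (x = 1 ∨ x = -1) → x * x = 1 := by
      rintro x (rfl | rfl) <;> norm_num
    -- v * v' ∈ V
    obtain ⟨T, hT⟩ := (hVchar v).1 hvV
    obtain ⟨T', hT'⟩ := (hVchar v').1 hv'V
    have hw : ∀ j, v j * v' j = g j * g' j := by
      intro j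
      have e := hcancel j
      have h2 := hsq _ (hVval v' hv'V j)
      have h3 := hsq _ (hgpm j)
      linear_combination (v' j * g j) * e - (v j * v' j) * h3 + (g j * g' j) * h2
    -- find in which set of blocks v*v' is -1
    have hwval : ∀ j, v j * v' j = if blk j ∈ (symmDiff T T') then (-1 : ℝ) else 1 := by
      intro j
      rw [hT, hT']
      by_cases h1 : blk j ∈ T <;> by_cases h2 : blk j ∈ T' <;>
        simp [hfV, h1, h2, Finset.mem_symmDiff]
    by_cases hTe : symmDiff T T' = ∅
    · -- then g = g'
      apply hne
      ext j
      have e := hcancel j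
      have ha2 := hsq _ (hVval v hvV j)
      have hac : v j * v' j = 1 := by rw [hwval j, hTe]; simp
      linear_combination (v j) * e - (g j) * ha2 + (g' j) * hac
    · obtain ⟨i, hi⟩ := Finset.nonempty_iff_ne_empty.2 hTe
      -- in block i, every coordinate has g = -1 or g' = -1
      set A := Finset.univ.filter (fun j : Fin (t * m) => (j : ℕ) / m = (i : ℕ) ∧ g j = -1) with hA
      set B := Finset.univ.filter (fun j : Fin (t * m) => (j : ℕ) / m = (i : ℕ) ∧ g' j = -1) with hB
      have hsub : Finset.univ.filter (fun j : Fin (t * m) => blk j = i) ⊆ A ∪ B := by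
        intro j hj
        simp only [Finset.mem_filter, Finset.mem_univ, true_and] at hj
        have hji' : (j : ℕ) / m = (i : ℕ) := congrArg Fin.val hj
        have hwj : g j * g' j = -1 := by
          rw [← hw j, hwval j, hj, if_pos hi]
        have : g j = -1 ∨ g' j = -1 := by
          rcases hgpm j with h1 | h1 <;> rcases hg'pm j with h2 | h2 <;>
            rw [h1, h2] at hwj <;> norm_num at hwj <;> tauto
        rcases this with h1 | h1
        · exact Finset.mem_union_left _ (by simp [hA, hji', h1])
        · exact Finset.mem_union_right _ (by simp [hB, hji', h1])
      have hcard : m ≤ A.card + B.card :=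
        le_trans (hblockcard i) (le_trans (Finset.card_le_card hsub) (Finset.card_union_le A B))
      have h1 := hgblk i
      have h2 := hg'blk i
      rw [← hA] at h1
      rw [← hB] at h2
      have hhalf : ((t * m : ℕ) : ℝ) / (2 * t) = (m : ℝ) / 2 := by
        have ht0 : (t : ℝ) ≠ 0 := Nat.cast_ne_zero.mpr ht.ne'
        push_cast
        field_simp
      rw [hhalf] at h1 h2
      have : (m : ℝ) ≤ (A.card : ℝ) + (B.card : ℝ) := by exact_mod_cast hcard
      linarith
  refine ⟨hdisj, ?_, ?_⟩
  · intro g hg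
    obtain ⟨hgpm, -, -⟩ := (hΓ g).1 hg
    exact hcosetcard _ (fun j => by
      rcases hr j with h1 | h1 <;> rcases hgpm j with h2 | h2 <;> rw [h1, h2] <;> norm_num)
  · -- the union
    have hΓfin : Γ.Finite := by
      apply Set.Finite.subset (Set.Finite.pi
        (fun _ : Fin (t * m) => (Set.finite_singleton (1 : ℝ)).insert (-1 : ℝ)))
      intro g hg
      obtain ⟨hgpm, -, -⟩ := (hΓ g).1 hg
      intro j _
      rcases hgpm j with h1 | h1 <;> rw [h1] <;> simp
    set Γf := hΓfin.toFinset with hΓf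
    have hcoe : Γ = ↑Γf := (hΓfin.coe_toFinset).symm
    set Cf : (Fin (t * m) → ℝ) → Finset (Fin (t * m) → ℝ) :=
      fun g => (hcosetfin (fun j => r j * g j)).toFinset with hCf
    have hCcoe : ∀ g, (coset (fun j => r j * g j)) = ↑(Cf g) :=
      fun g => ((hcosetfin _).coe_toFinset).symm
    have hunion : (⋃ g ∈ Γ, coset (fun j => r j * g j)) = ↑(Γf.biUnion Cf) := by
      rw [Finset.coe_biUnion, hcoe]
      apply Set.iUnion_congr
      intro g
      apply Set.iUnion_congr
      intro _
      exact hCcoe g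
    rw [hunion, Set.ncard_coe_finset]
    have hdisjF : ∀ g ∈ Γf, ∀ g' ∈ Γf, g ≠ g' → Disjoint (Cf g) (Cf g') := by
      intro g hgf g' hg'f hne
      rw [← Finset.disjoint_coe, ← hCcoe, ← hCcoe]
      exact hdisj g (hΓfin.mem_toFinset.1 hgf) g' (hΓfin.mem_toFinset.1 hg'f) hne
    rw [Finset.card_biUnion hdisjF]
    have hcards : ∀ g ∈ Γf, (Cf g).card = 2 ^ t := by
      intro g hgf
      have hgΓ := hΓfin.mem_toFinset.1 hgf
      obtain ⟨hgpm, -, -⟩ := (hΓ g).1 hgΓ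
      have : (coset (fun j => r j * g j)).ncard = 2 ^ t :=
        hcosetcard _ (fun j => by
          rcases hr j with h1 | h1 <;> rcases hgpm j with h2 | h2 <;> rw [h1, h2] <;> norm_num)
      rwa [hCcoe g, Set.ncard_coe_finset] at this
    rw [Finset.sum_congr rfl hcards, Finset.sum_const, smul_eq_mul]
    rw [hcoe, Set.ncard_coe_finset]
    ring
end

section
/- Let ℓ ≥ 1 and let f_1,…,f_n be linear functionals on ℝ^ℓ. Then the number of sign patterns s ∈ {±1}^n for which there exists x ∈ ℝ^ℓ with s_i·f_i(x) > 0 for every i ∈ [n] is at most 2·∑_{j=0}^{ℓ−1} C(n−1,j), where C(m,k) denotes the binomial coefficient. -/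
open Finset Module

section aux

variable {V : Type} [AddCommGroup V] [Module ℝ V]

def cells {n : ℕ} (f : Fin n → V →ₗ[ℝ] ℝ) : Set (Fin n → ℝ) :=
  {s | (∀ i, s i = 1 ∨ s i = -1) ∧ ∃ x, ∀ i, s i * f i x > 0}

lemma cells_finite {n : ℕ} (f : Fin n → V →ₗ[ℝ] ℝ) : (cells f).Finite := by
  apply Set.Finite.subset
    (Set.Finite.pi (t := fun _ : Fin n => ({1, -1} : Set ℝ))
      (fun i => (Set.finite_singleton (-1:ℝ)).insert 1))
  intro s hs
  simp only [Set.mem_pi, Set.mem_univ, forall_true_left]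
  intro i
  rcases hs.1 i with h | h <;> simp [h]

lemma cells_subsingleton_zero (f : Fin 0 → V →ₗ[ℝ] ℝ) : (cells f).ncard ≤ 1 := by
  have : cells f ⊆ {fun _ => (1:ℝ)} := by
    intro s _
    simp only [Set.mem_singleton_iff]
    funext i; exact absurd i.2 (by omega)
  calc (cells f).ncard ≤ ({fun _ => (1:ℝ)} : Set (Fin 0 → ℝ)).ncard :=
        Set.ncard_le_ncard this (Set.finite_singleton _)
    _ = 1 := Set.ncard_singleton _

lemma cells_one_le_two (f : Fin 1 → V →ₗ[ℝ] ℝ) : (cells f).ncard ≤ 2 := by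
  have : cells f ⊆ {fun _ => (1:ℝ), fun _ => (-1:ℝ)} := by
    intro s hs
    rcases hs.1 0 with h | h
    · left; funext i; rw [Fin.eq_zero i]; exact h
    · right; funext i; rw [Fin.eq_zero i]; exact h
  calc (cells f).ncard ≤ _ := Set.ncard_le_ncard this ((Set.finite_singleton _).insert _)
    _ ≤ 2 := by
        apply le_trans (Set.ncard_insert_le _ _)
        simp

lemma exists_ker_witness {n : ℕ} (f : Fin n → V →ₗ[ℝ] ℝ) (φ : V →ₗ[ℝ] ℝ)
    (s : Fin n → ℝ) (x y : V) (hx : ∀ i, s i * f i x > 0) (hy : ∀ i, s i * f i y > 0)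
    (hφx : φ x > 0) (hφy : φ y < 0) :
    ∃ z, φ z = 0 ∧ ∀ i, s i * f i z > 0 := by
  refine ⟨(-φ y) • x + (φ x) • y, by simp only [map_add, map_smul, smul_eq_mul]; ring, ?_⟩
  intro i
  have h1 := hx i
  have h2 := hy i
  simp only [map_add, map_smul, smul_eq_mul]
  nlinarith [mul_pos (neg_pos.2 hφy) h1, mul_pos hφx h2]

lemma cells_rec {n : ℕ} (f : Fin (n + 1) → V →ₗ[ℝ] ℝ) :
    (cells f).ncard ≤ (cells (fun i : Fin n => f i.castSucc)).ncard +
      (cells (fun i : Fin n =>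
        (f i.castSucc).comp (LinearMap.ker (f (Fin.last n))).subtype)).ncard := by
  classical
  set g : Fin n → V →ₗ[ℝ] ℝ := fun i => f i.castSucc with hg
  set f' : Fin n → (LinearMap.ker (f (Fin.last n)) : Submodule ℝ V) →ₗ[ℝ] ℝ :=
    fun i => (f i.castSucc).comp (LinearMap.ker (f (Fin.last n))).subtype with hf'
  set π : (Fin (n + 1) → ℝ) → (Fin n → ℝ) := fun s => s ∘ Fin.castSucc with hπ
  set A : Set (Fin (n+1) → ℝ) := {s ∈ cells f | s (Fin.last n) = 1} with hA
  set B : Set (Fin (n+1) → ℝ) := {s ∈ cells f | s (Fin.last n) = -1} with hB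
  have hcover : cells f = A ∪ B := by
    ext s
    constructor
    · intro hs
      rcases hs.1 (Fin.last n) with h | h
      · exact Or.inl ⟨hs, h⟩
      · exact Or.inr ⟨hs, h⟩
    · rintro (h | h) <;> exact h.1
  have hfin := cells_finite f
  have hAfin : A.Finite := hfin.subset (fun s hs => hs.1)
  have hBfin : B.Finite := hfin.subset (fun s hs => hs.1)
  have hdisj : Disjoint A B := by
    rw [Set.disjoint_left]
    rintro s ⟨_, h1⟩ ⟨_, h2⟩
    rw [h1] at h2; norm_num at h2
  have hinj : ∀ (c : ℝ) (s t : Fin (n+1) → ℝ), s (Fin.last n) = c → t (Fin.last n) = c →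
      π s = π t → s = t := by
    intro c s t hs ht hst
    funext i
    induction i using Fin.lastCases with
    | last => rw [hs, ht]
    | cast j => exact congrFun hst j
  have hcardA : A.ncard = (π '' A).ncard :=
    (Set.ncard_image_of_injOn (fun s hs t ht h => hinj 1 s t hs.2 ht.2 h)).symm
  have hcardB : B.ncard = (π '' B).ncard :=
    (Set.ncard_image_of_injOn (fun s hs t ht h => hinj (-1) s t hs.2 ht.2 h)).symm
  have himg : ∀ s ∈ cells f, π s ∈ cells g := by
    rintro s ⟨hsign, x, hx⟩
    exact ⟨fun i => hsign i.castSucc, x, fun i => hx i.castSucc⟩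
  have hsub1 : π '' A ∪ π '' B ⊆ cells g := by
    rintro u (⟨s, hs, rfl⟩ | ⟨s, hs, rfl⟩) <;> exact himg s hs.1
  have hsub2 : π '' A ∩ π '' B ⊆ cells f' := by
    rintro u ⟨⟨s, hs, rfl⟩, ⟨t, ht, hts⟩⟩
    obtain ⟨⟨hssign, x, hx⟩, hslast⟩ := hs
    obtain ⟨⟨htsign, y, hy⟩, htlast⟩ := ht
    have hφx : f (Fin.last n) x > 0 := by
      have := hx (Fin.last n); rw [hslast, one_mul] at this; exact this
    have hφy : f (Fin.last n) y < 0 := by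
      have := hy (Fin.last n); rw [htlast] at this; linarith
    have hy' : ∀ i : Fin n, (π s) i * f i.castSucc y > 0 := by
      intro i
      have : (π t) i = (π s) i := congrFun hts i
      have h2 := hy i.castSucc
      rw [show t i.castSucc = (π t) i from rfl, this] at h2
      exact h2
    obtain ⟨z, hz0, hz⟩ := exists_ker_witness (fun i : Fin n => f i.castSucc)
      (f (Fin.last n)) (π s) x y (fun i => hx i.castSucc) hy' hφx hφy
    exact ⟨fun i => hssign i.castSucc, ⟨z, hz0⟩, fun i => hz i⟩
  have key : (π '' A).ncard + (π '' B).ncard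
      = (π '' A ∪ π '' B).ncard + (π '' A ∩ π '' B).ncard := by
    rw [Set.ncard_union_add_ncard_inter _ _ (hAfin.image π) (hBfin.image π)]
  calc (cells f).ncard = A.ncard + B.ncard := by
        rw [hcover, Set.ncard_union_eq hdisj hAfin hBfin]
    _ = (π '' A ∪ π '' B).ncard + (π '' A ∩ π '' B).ncard := by rw [← key, hcardA, hcardB]
    _ ≤ (cells g).ncard + (cells f').ncard := by
        exact add_le_add (Set.ncard_le_ncard hsub1 (cells_finite g))
          (Set.ncard_le_ncard hsub2 (cells_finite f'))

lemma cells_last_zero {n : ℕ} (f : Fin (n+1) → V →ₗ[ℝ] ℝ)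
    (h : f (Fin.last n) = 0) : cells f = ∅ := by
  ext s
  simp only [Set.mem_empty_iff_false, iff_false]
  rintro ⟨hsign, x, hx⟩
  have := hx (Fin.last n)
  rw [h] at this
  simp at this

lemma cells_dim1 {n : ℕ} [FiniteDimensional ℝ V] (hd : finrank ℝ V = 1)
    (f : Fin (n+1) → V →ₗ[ℝ] ℝ) : (cells f).ncard ≤ 2 := by
  classical
  obtain ⟨v, hv0, hv⟩ := finrank_eq_one_iff'.mp hd
  set σ : V → (Fin (n+1) → ℝ) := fun w i => if 0 < f i w then 1 else -1 with hσ
  have key : ∀ s ∈ cells f, ∀ w : V, (∀ i, s i * f i w > 0) → s = σ w := by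
    rintro s ⟨hsign, _⟩ w hw
    funext i
    have h := hw i
    rcases hsign i with h1 | h1 <;> rw [h1] at h ⊢
    · rw [hσ]; simp only [one_mul] at h; simp [h]
    · have : f i w < 0 := by linarith
      simp [hσ, not_lt.2 this.le]
  have hsub : cells f ⊆ {σ v, σ (-v)} := by
    intro s hs
    obtain ⟨hsign, x, hx⟩ := id hs
    obtain ⟨c, hc⟩ := hv x
    have hc0 : c ≠ 0 := by
      rintro rfl
      have := hx 0
      rw [← hc] at this
      simp at this
    rcases lt_or_gt_of_ne hc0 with hneg | hpos
    · right
      apply key s hs (-v)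
      intro i
      have h := hx i
      rw [← hc, map_smul, smul_eq_mul] at h
      have e : s i * f i (-v) = (-c⁻¹) * (s i * (c * f i v)) := by
        rw [map_neg, show (-c⁻¹) * (s i * (c * f i v)) = (c⁻¹ * c) * (s i * -(f i v)) by ring,
          inv_mul_cancel₀ hc0, one_mul]
      rw [e]
      exact mul_pos (by simpa using inv_lt_zero.2 hneg) h
    · left
      apply key s hs v
      intro i
      have h := hx i
      rw [← hc, map_smul, smul_eq_mul] at h
      have e : s i * f i v = c⁻¹ * (s i * (c * f i v)) := by
        rw [show c⁻¹ * (s i * (c * f i v)) = (c⁻¹ * c) * (s i * f i v) by ring,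
          inv_mul_cancel₀ hc0, one_mul]
      rw [e]
      exact mul_pos (inv_pos.2 hpos) h
  calc (cells f).ncard ≤ ({σ v, σ (-v)} : Set (Fin (n+1) → ℝ)).ncard :=
        Set.ncard_le_ncard hsub ((Set.finite_singleton _).insert _)
    _ ≤ 2 := le_trans (Set.ncard_insert_le _ _) (by simp)

end aux

lemma pascal_sum (k e : ℕ) :
    ∑ j ∈ range (e + 1), k.choose j + ∑ j ∈ range e, k.choose j
      = ∑ j ∈ range (e + 1), (k + 1).choose j := by
  rw [Finset.sum_range_succ' (fun j => k.choose j) e,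
      Finset.sum_range_succ' (fun j => (k + 1).choose j) e]
  simp only [Nat.choose_succ_succ, Nat.choose_zero_right]
  rw [Finset.sum_add_distrib]
  simp only [Nat.succ_eq_add_one]
  omega

lemma one_le_sum_choose {d k : ℕ} (hd : 1 ≤ d) :
    1 ≤ ∑ j ∈ range d, k.choose j := by
  have h0 : (0 : ℕ) ∈ range d := mem_range.2 hd
  calc 1 = k.choose 0 := (Nat.choose_zero_right k).symm
    _ ≤ ∑ j ∈ range d, k.choose j :=
        Finset.single_le_sum (f := fun j => k.choose j) (fun _ _ => Nat.zero_le _) h0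

lemma main_bound : ∀ (n : ℕ) (V : Type) [AddCommGroup V] [Module ℝ V]
    [FiniteDimensional ℝ V], 1 ≤ Module.finrank ℝ V → ∀ f : Fin n → V →ₗ[ℝ] ℝ,
    (cells f).ncard ≤ 2 * ∑ j ∈ range (Module.finrank ℝ V), (n - 1).choose j := by
  intro n
  induction n with
  | zero =>
    intro V _ _ _ hd f
    have h1 := cells_subsingleton_zero f
    have h2 := one_le_sum_choose (k := 0 - 1) hd
    omega
  | succ m ih =>
    intro V _ _ _ hd f
    by_cases h0 : f (Fin.last m) = 0
    · rw [cells_last_zero f h0]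
      simp
    rcases eq_or_lt_of_le hd with hd1 | hd2
    · -- dimension 1
      have h2 := cells_dim1 hd1.symm f
      rw [← hd1]
      simpa using h2
    · -- dimension ≥ 2
      cases m with
      | zero =>
        have h1 := cells_one_le_two f
        have h2 := one_le_sum_choose (k := 0 + 1 - 1) hd
        omega
      | succ k =>
        set φ := f (Fin.last (k + 1)) with hφ
        set K := LinearMap.ker φ with hK
        have hr1 : Module.finrank ℝ (LinearMap.range φ) = 1 := by
          have hle : Module.finrank ℝ (LinearMap.range φ) ≤ 1 := by
            simpa using Submodule.finrank_le (LinearMap.range φ)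
          have hne : LinearMap.range φ ≠ ⊥ := by
            rwa [ne_eq, LinearMap.range_eq_bot]
          have hnz : Module.finrank ℝ (LinearMap.range φ) ≠ 0 := by
            rw [ne_eq, Submodule.finrank_eq_zero]
            exact hne
          omega
        have hrn := LinearMap.finrank_range_add_finrank_ker φ
        rw [← hK] at hrn
        have hKd : Module.finrank ℝ K + 1 = Module.finrank ℝ V := by
          rw [← hrn, hr1]; omega
        have hK1 : 1 ≤ Module.finrank ℝ K := by omega
        have r := cells_rec f
        have h1 := ih V hd (fun i => f i.castSucc)
        have h2 := ih K hK1 (fun i => (f i.castSucc).comp K.subtype)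
        have harith := pascal_sum k (Module.finrank ℝ K)
        rw [hKd] at harith
        calc (cells f).ncard
            ≤ (cells (fun i : Fin (k + 1) => f i.castSucc)).ncard +
              (cells (fun i : Fin (k + 1) => (f i.castSucc).comp K.subtype)).ncard := r
          _ ≤ 2 * ∑ j ∈ range (Module.finrank ℝ V), (k + 1 - 1).choose j +
              2 * ∑ j ∈ range (Module.finrank ℝ K), (k + 1 - 1).choose j :=
              add_le_add h1 h2
          _ = 2 * ∑ j ∈ range (Module.finrank ℝ V), (k + 1 + 1 - 1).choose j := by
              simp only [Nat.add_sub_cancel]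
              omega



open Finset

/-- Let ℓ ≥ 1 and let f_1,…,f_n be linear functionals on ℝ^ℓ. Then the
number of sign patterns s ∈ {±1}^n for which there exists x ∈ ℝ^ℓ with s_i·f_i(x) > 0
for every i ∈ [n] is at most 2·∑_{j=0}^{ℓ−1} C(n−1,j). -/
theorem stmt14 (n ℓ : ℕ) (hℓ : 1 ≤ ℓ)
    (f : Fin n → ((Fin ℓ → ℝ) →ₗ[ℝ] ℝ)) :
    Set.ncard {s : Fin n → ℝ | (∀ i, s i = 1 ∨ s i = -1) ∧
        ∃ x : Fin ℓ → ℝ, ∀ i, s i * f i x > 0} ≤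
      2 * ∑ j ∈ Finset.range ℓ, Nat.choose (n - 1) j := by
  have hfin : Module.finrank ℝ (Fin ℓ → ℝ) = ℓ := Module.finrank_fin_fun ℝ
  have h := main_bound n (Fin ℓ → ℝ) (by rw [hfin]; exact hℓ) f
  rw [hfin] at h
  exact h
end
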